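/- Let α > 2, r = ⌈α⌉, s ≥ 3 and t positive integers with μ^s(0) = x00y, |x| = t, and 2 < r − t/2^s < α. If 00v ∈ 𝓛 is α-power-free, then δ^t μ^s(0^r v) is α-power-free. -/

import Mathlib

/-! Let `u` be a factor of `δ^t μ^s(0^r v)` with period `p` and `|u| ≥ α p > 2p`. A factor of a
`μ`-image whose length exceeds twice its period has even period, so it desubstitutes: `u` comes
from a window `[i', j')` of `0^r v` of period `p' = p / 2^s`. If the window lies in `0^r`, then
`|u| ≤ 2^s r - t < α 2^s ≤ α p`. If it starts at most two letters before `v`, it is a factor of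
`00v`, and `α`-power-freeness of `00v` bounds `|u|`. Otherwise it starts at least three zeros
before `v` and ends inside `v`, and the period copies three zeros into `00v`, which is impossible
in `𝓛`. -/

/-- Thue–Morse morphism: 0 ↦ 01, 1 ↦ 10 (false = 0, true = 1). -/
def mu : List Bool → List Bool :=
  fun w => w.flatMap (fun b => if b then [true, false] else [false, true])

/-- `w` has period `p`: `w[i] = w[i+p]` whenever both defined. -/
def HasPeriod (w : List Bool) (p : ℕ) : Prop :=
  ∀ i, i + p < w.length → w[i]? = w[i + p]?

/-- `w` is α-power-free: no factor `u` has a period `p` with `|u|/p ≥ α`. -/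
def PowerFree (α : ℝ) (w : List Bool) : Prop :=
  ∀ u p, u <:+: w → 0 < p → HasPeriod u p → (u.length : ℝ) / p < α

/-- `𝓛`: factors of images of `mu`. -/
def InL (w : List Bool) : Prop := ∃ x, w <:+: mu x

def HasPeriodOn (w : List Bool) (i j p : ℕ) : Prop :=
  ∀ k, i ≤ k → k + p < j → w[k]? = w[k + p]?

lemma mu_cons (b : Bool) (w : List Bool) : mu (b :: w) = b :: (!b) :: mu w := by
  cases b <;> simp [mu]

lemma mu_length (w : List Bool) : (mu w).length = 2 * w.length := by
  induction w with
  | nil => rfl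
  | cons b w ih => simp only [mu_cons, List.length_cons, ih]; ring

lemma mu_getElem?_two_mul (z : List Bool) (k : ℕ) : (mu z)[2 * k]? = z[k]? := by
  induction z generalizing k with
  | nil => simp [mu]
  | cons b z ih => cases k <;> simp [mu_cons, Nat.mul_succ, ih]

lemma mu_getElem?_two_mul_add_one (z : List Bool) (k : ℕ) :
    (mu z)[2 * k + 1]? = z[k]?.map not := by
  induction z generalizing k with
  | nil => simp [mu]
  | cons b z ih => cases k <;> simp [mu_cons, Nat.mul_succ, ih]

lemma mu_getElem?_succ_of_even (z : List Bool) {n : ℕ} (hn : Even n) :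
    (mu z)[n + 1]? = (mu z)[n]?.map not := by
  obtain ⟨k, rfl⟩ := hn
  rw [← two_mul, mu_getElem?_two_mul, mu_getElem?_two_mul_add_one]

lemma odd_of_mu_getElem?_eq {z : List Bool} {n : ℕ} {b : Bool}
    (h₀ : (mu z)[n]? = some b) (h₁ : (mu z)[n + 1]? = some b) : Odd n := by
  by_contra hn
  rw [mu_getElem?_succ_of_even z (Nat.not_odd_iff_even.mp hn), h₀] at h₁
  simp at h₁

-- Equal adjacent letters of a `μ`-image start at odd positions; `bbb` would need two in a row.
lemma InL.getElem?_add_two_ne {w : List Bool} (hw : InL w) {m : ℕ} {b : Bool}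
    (h₀ : w[m]? = some b) (h₁ : w[m + 1]? = some b) : w[m + 2]? ≠ some b := by
  intro h₂
  obtain ⟨x, hx⟩ := hw
  obtain ⟨k, -, hk⟩ := List.infix_iff_getElem?.mp hx
  have lift : ∀ n, w[n]? = some b → (mu x)[n + k]? = some b := fun n hn => by
    obtain ⟨hlt, rfl⟩ := List.getElem?_eq_some_iff.mp hn
    exact hk n hlt
  have e₁ := lift _ h₁
  have e₂ := lift _ h₂
  rw [show m + 1 + k = m + k + 1 by omega] at e₁
  rw [show m + 2 + k = m + k + 1 + 1 by omega] at e₂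
  exact Nat.not_odd_iff_even.mpr (odd_of_mu_getElem?_eq (lift m h₀) e₁).add_one
    (odd_of_mu_getElem?_eq e₁ e₂)

lemma HasPeriodOn.even_of_mu {z : List Bool} {i j p : ℕ} (h : HasPeriodOn (mu z) i j p)
    (hij : 2 * p + i < j) (hj : j ≤ (mu z).length) : Even p := by
  by_contra hp
  obtain ⟨k, rfl⟩ := Nat.not_even_iff_odd.mp hp
  -- an odd period makes the letters alternate across the window, contradicting the period itself
  have flip : ∀ n, i ≤ n → n + 1 + (2 * k + 1) < j → (mu z)[n + 1]? = (mu z)[n]?.map not := by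
    intro n hin hn
    rcases Nat.even_or_odd n with hn' | hn'
    · exact mu_getElem?_succ_of_even z hn'
    · have := mu_getElem?_succ_of_even z (hn'.add_odd (odd_two_mul_add_one k))
      rwa [add_right_comm, ← h n hin (by omega), ← h (n + 1) (by omega) hn] at this
  have alternate : ∀ m ≤ k, (mu z)[i + 2 * m]? = (mu z)[i]? := by
    intro m hm
    induction m with
    | zero => rfl
    | succ m ih =>
      rw [show i + 2 * (m + 1) = i + 2 * m + 1 + 1 by ring, flip _ (by omega) (by omega),
        flip _ (by omega) (by omega), ih (by omega), Option.map_map]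
      simp [Function.comp_def]
  obtain ⟨b, hb⟩ : ∃ b, (mu z)[i]? = some b := ⟨_, List.getElem?_eq_getElem (by omega)⟩
  have hper := h i le_rfl (by omega)
  rw [← add_assoc, flip _ (by omega) (by omega), alternate k le_rfl, hb] at hper
  simp at hper

lemma HasPeriodOn.of_mu {z : List Bool} {i j q : ℕ} (h : HasPeriodOn (mu z) i j (2 * q))
    (hij : 2 * q + i < j) : HasPeriodOn z (i / 2) ((j + 1) / 2) q := by
  intro k hk hkj
  by_cases hi : i ≤ 2 * k
  · have := h (2 * k) hi (by omega)
    rwa [← mul_add, mu_getElem?_two_mul, mu_getElem?_two_mul] at this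
  · have := h (2 * k + 1) (by omega) (by omega)
    rw [add_right_comm, ← mul_add, mu_getElem?_two_mul_add_one,
      mu_getElem?_two_mul_add_one] at this
    exact Option.map_injective (fun a b hab => by simpa using hab) this

lemma HasPeriodOn.exists_of_mu_iterate {z : List Bool} (s : ℕ) {i j p : ℕ}
    (h : HasPeriodOn (mu^[s] z) i j p) (hp : 0 < p) (hij : 2 * p + i < j)
    (hj : j ≤ (mu^[s] z).length) :
    ∃ p' i' j', p = 2 ^ s * p' ∧ 0 < p' ∧ 2 ^ s * i' ≤ i ∧ j ≤ 2 ^ s * j' ∧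
      j' ≤ z.length ∧ 2 * p' + i' < j' ∧ HasPeriodOn z i' j' p' := by
  induction s generalizing i j p with
  | zero => exact ⟨p, i, j, by simp, hp, by simp, by simp, hj, hij, h⟩
  | succ s ih =>
    rw [Function.iterate_succ_apply'] at h hj
    obtain ⟨q, rfl⟩ := even_iff_two_dvd.mp (h.even_of_mu hij hj)
    rw [mu_length] at hj
    obtain ⟨p', i', j', rfl, hp', hi', hj', hj'z, hij', h'⟩ :=
      ih (h.of_mu (by omega)) (by omega) (by omega) (by omega)
    refine ⟨p', i', j', by ring, hp', ?_, ?_, hj'z, hij', h'⟩ <;>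
      rw [pow_succ, mul_comm _ 2, mul_assoc] <;> omega

lemma HasPeriod.exists_hasPeriodOn_of_infix_drop {u w : List Bool} {p t : ℕ}
    (hu : u <:+: w.drop t) (hu₀ : 0 < u.length) (h : HasPeriod u p) :
    ∃ i, t ≤ i ∧ i + u.length ≤ w.length ∧ HasPeriodOn w i (i + u.length) p := by
  obtain ⟨k, hk, hget⟩ := List.infix_iff_getElem?.mp hu
  have shift : ∀ n < u.length, w[t + k + n]? = u[n]? := fun n hn => by
    rw [List.getElem?_eq_getElem hn, ← hget n hn, List.getElem?_drop]
    congr 1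
    ring
  refine ⟨t + k, by omega, by simp at hk; omega, fun n hn hnp => ?_⟩
  have := h (n - (t + k)) (by omega)
  rwa [← shift _ (by omega), ← shift _ (by omega), Nat.add_sub_cancel' hn,
    ← Nat.add_assoc, Nat.add_sub_cancel' hn] at this

lemma PowerFree.lt_of_hasPeriodOn {α : ℝ} {w : List Bool} {i j p : ℕ} (hw : PowerFree α w)
    (h : HasPeriodOn w i j p) (hp : 0 < p) (hj : j ≤ w.length) :
    ((j - i : ℕ) : ℝ) < α * p := by
  have hu : HasPeriod ((w.drop i).take (j - i)) p := fun n hn => by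
    simp only [List.length_take, List.length_drop] at hn
    simp only [List.getElem?_take, List.getElem?_drop, if_pos (show n < j - i by omega),
      if_pos (show n + p < j - i by omega), ← Nat.add_assoc]
    exact h (i + n) (by omega) (by omega)
  have := hw _ p ((List.take_prefix _ _).isInfix.trans (List.drop_suffix _ _).isInfix) hp hu
  rwa [div_lt_iff₀ (by exact_mod_cast hp), List.length_take, List.length_drop,
    min_eq_left (by omega)] at this

lemma getElem?_replicate_append_eq {α : Type*} {a : α} {r r' m : ℕ} (v : List α)
    (h : r ≤ m + r') :
    (List.replicate r a ++ v)[m]? = (List.replicate r' a ++ v)[m + r' - r]? := by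
  simp only [List.getElem?_append, List.length_replicate, List.getElem?_replicate]
  split_ifs <;> first | rfl | omega | congr 1; omega

lemma PowerFree.lt_of_hasPeriodOn_replicate_append {α : ℝ} {v : List Bool} {r i j p : ℕ}
    (hw : PowerFree α ([false, false] ++ v))
    (h : HasPeriodOn (List.replicate r false ++ v) i j p) (hp : 0 < p) (hri : r ≤ i + 2)
    (hj : j ≤ r + v.length) : ((j - i : ℕ) : ℝ) < α * p := by
  have h' : HasPeriodOn (List.replicate 2 false ++ v) (i + 2 - r) (j + 2 - r) p :=
    fun k hk hkp => by
      have := h (k + r - 2) (by omega) (by omega)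
      rwa [getElem?_replicate_append_eq (r' := 2) (m := k + r - 2) v (by omega),
        getElem?_replicate_append_eq (r' := 2) (m := k + r - 2 + p) v (by omega),
        show k + r - 2 + 2 - r = k by omega, show k + r - 2 + p + 2 - r = k + p by omega] at this
  have := hw.lt_of_hasPeriodOn h' hp (by simp; omega)
  rwa [show j + 2 - r - (i + 2 - r) = j - i by omega] at this

lemma InL.not_hasPeriodOn_replicate_append {v : List Bool} {r i j p : ℕ}
    (hL : InL ([false, false] ++ v)) (h : HasPeriodOn (List.replicate r false ++ v) i j p)
    (hp : 0 < p) (hij : 2 * p + i < j) (hir : i + 2 < r) (hrj : r < j) : False := by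
  have zero_of_lt : ∀ n < r, (List.replicate r false ++ v)[n]? = some false := fun n hn => by
    simp [List.getElem?_append_left, hn]
  have no_triple : ∀ m, r ≤ m + 2 → (List.replicate r false ++ v)[m]? = some false →
      (List.replicate r false ++ v)[m + 1]? = some false →
      (List.replicate r false ++ v)[m + 2]? ≠ some false := by
    intro m hm h₀ h₁
    rw [getElem?_replicate_append_eq (r' := 2) v (by omega)] at h₀ h₁ ⊢
    rw [show m + 1 + 2 - r = m + 2 - r + 1 by omega] at h₁
    rw [show m + 2 + 2 - r = m + 2 - r + 2 by omega]
    exact hL.getElem?_add_two_ne h₀ h₁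
  rcases le_or_gt p (r - i) with hpr | hpr
  · refine no_triple (r - 2) (by omega) (zero_of_lt _ (by omega)) ?_ ?_
    · rw [show r - 2 + 1 = r - 1 by omega]
      exact zero_of_lt _ (by omega)
    · rw [show r - 2 + 2 = r - p + p by omega, ← h _ (by omega) (by omega)]
      exact zero_of_lt _ (by omega)
  · have copy : ∀ k ≤ 2, (List.replicate r false ++ v)[i + p + k]? = some false := by
      intro k hk
      rw [add_right_comm, ← h _ (by omega) (by omega)]
      exact zero_of_lt _ (by omega)
    exact no_triple (i + p) (by omega) (copy 0 (by omega)) (copy 1 (by omega)) (copy 2 le_rfl)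

theorem lemma5_part3_general (α : ℝ) (hα : 2 < α) (r s t : ℕ)
    (hβ2 : (r : ℝ) - t / 2 ^ s < α)
    (v : List Bool) (hL : InL ([false, false] ++ v))
    (hfree : PowerFree α ([false, false] ++ v)) :
    PowerFree α ((mu^[s] (List.replicate r false ++ v)).drop t) := by
  intro u p hu hp hper
  rw [div_lt_iff₀ (by exact_mod_cast hp)]
  by_contra! hαp
  have h2p : 2 * p < u.length := by
    have : (2 * p : ℝ) < u.length := by nlinarith [(Nat.cast_pos (α := ℝ)).mpr hp]
    exact_mod_cast this
  obtain ⟨i, hti, hij, hPW⟩ := hper.exists_hasPeriodOn_of_infix_drop hu (by omega)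
  obtain ⟨p', i', j', rfl, hp', hi', hj', hj'Z, hij', hPZ⟩ :=
    hPW.exists_of_mu_iterate s hp (by omega) hij
  have hp'R : (1 : ℝ) ≤ p' := by exact_mod_cast hp'
  have h2s : (0 : ℝ) < 2 ^ s := by positivity
  push_cast at hαp
  rcases le_or_gt j' r with hjr | hrj
  · have hu : t + u.length ≤ 2 ^ s * r := by
      have := Nat.mul_le_mul_left (2 ^ s) hjr
      omega
    have hβ : (2 : ℝ) ^ s * r - t < α * 2 ^ s := by
      have := (mul_lt_mul_iff_of_pos_right h2s).mpr hβ2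
      rwa [sub_mul, div_mul_cancel₀ _ h2s.ne', mul_comm] at this
    have : (t + u.length : ℝ) ≤ 2 ^ s * r := by exact_mod_cast hu
    nlinarith
  rcases le_or_gt r (i' + 2) with hri | hir
  · have hlt := hfree.lt_of_hasPeriodOn_replicate_append hPZ hp' hri (by simpa using hj'Z)
    have hu : u.length ≤ 2 ^ s * (j' - i') := by rw [Nat.mul_sub]; omega
    have : (u.length : ℝ) ≤ 2 ^ s * (j' - i' : ℕ) := by exact_mod_cast hu
    nlinarith
  · exact hL.not_hasPeriodOn_replicate_append hPZ hp' hij' hir hrj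

theorem lemma5_part3 (α : ℝ) (hα : 2 < α) (r s t : ℕ) (hr : r = ⌈α⌉₊)
    (hs : 3 ≤ s) (ht : 0 < t) (x y : List Bool)
    (hx : mu^[s] [false] = x ++ [false, false] ++ y) (hxt : x.length = t)
    (hβ1 : 2 < (r : ℝ) - t / 2 ^ s) (hβ2 : (r : ℝ) - t / 2 ^ s < α)
    (v : List Bool) (hL : InL ([false, false] ++ v))
    (hfree : PowerFree α ([false, false] ++ v)) :
    PowerFree α ((mu^[s] (List.replicate r false ++ v)).drop t) :=
  lemma5_part3_general α hα r s t hβ2 v hL hfree
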